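/- Let A be a linear map from R^{n×p} to a Euclidean space E, b ∈ E, λ > 0, and f : E → R strictly convex. If X̄ minimizes X ↦ f(A(X) − b) + λ‖X‖_*, then the solution set of this problem equals {X : A(X) = A(X̄) and ‖X‖_* = ‖X̄‖_*}. -/

import Mathlib

/-
The objective is `f ∘ (A · - b) + λ‖·‖_*`. The nuclear norm is convex, being the support
function `‖X‖_* = max {tr (Uᵀ X) : U a contraction}`; the maximum is attained at
`U = X V Σ⁺ Vᵀ`, where `Vᵀ (Xᵀ X) V = Σ²` diagonalizes `Xᵀ X`. Hence if two minimizers had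
different images under `A`, strict convexity of `f` would make their midpoint strictly better.
So all minimizers share `A X`, and then, since `λ > 0`, also `‖X‖_*`. Conversely any `X` with
the same `A X` and `‖X‖_*` as `X̄` has the same objective value.
-/

open Matrix

noncomputable def nuclearNorm {m n : Type*} [Fintype m] [Fintype n] [DecidableEq n]
    (A : Matrix m n ℝ) : ℝ :=
  ((Matrix.isHermitian_conjTranspose_mul_self A).eigenvectorUnitary.1 *
    Matrix.diagonal (Real.sqrt ∘ (Matrix.isHermitian_conjTranspose_mul_self A).eigenvalues) *
    (star (Matrix.isHermitian_conjTranspose_mul_self A).eigenvectorUnitary : Matrix n n ℝ)).trace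

noncomputable def opNorm {m n : Type*} [Fintype m] [Fintype n] [DecidableEq m] [DecidableEq n]
    (A : Matrix m n ℝ) : ℝ :=
  ‖(LinearMap.toContinuousLinearMap
      (Matrix.toEuclideanLin A : EuclideanSpace ℝ n →ₗ[ℝ] EuclideanSpace ℝ m))‖

def finner {m n : Type*} [Fintype m] [Fintype n] (A B : Matrix m n ℝ) : ℝ :=
  (Aᵀ * B).trace

noncomputable def nuclearSubdiff {m n : Type*} [Fintype m] [Fintype n] [DecidableEq n]
    (X : Matrix m n ℝ) : Set (Matrix m n ℝ) :=
  {Y | ∀ Z, nuclearNorm X + finner Y (Z - X) ≤ nuclearNorm Z}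

def rectDiag (n p : ℕ) (s : Fin p → ℝ) : Matrix (Fin n) (Fin p) ℝ :=
  Matrix.of fun i j => if (i : ℕ) = (j : ℕ) then s j else 0

def blockIR (n p r : ℕ) (R : Matrix (Fin (n - r)) (Fin (p - r)) ℝ) :
    Matrix (Fin n) (Fin p) ℝ :=
  Matrix.of fun i j =>
    if h : (i : ℕ) < r ∨ (j : ℕ) < r then (if (i : ℕ) = (j : ℕ) then 1 else 0)
    else R ⟨i - r, by have := i.isLt; omega⟩ ⟨j - r, by have := j.isLt; omega⟩

namespace Matrix

variable {m n : Type*} [Fintype m] [Fintype n]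

lemma dotProduct_mulVec_self {R : Type*} [CommSemiring R] (M : Matrix m n R) (v : n → R) :
    (M *ᵥ v) ⬝ᵥ (M *ᵥ v) = v ⬝ᵥ ((Mᵀ * M) *ᵥ v) := by
  rw [← mulVec_mulVec, dotProduct_mulVec v, vecMul_transpose]

lemma dotProduct_le_sqrt_mul_sqrt (x y : n → ℝ) : x ⬝ᵥ y ≤ √(x ⬝ᵥ x) * √(y ⬝ᵥ y) := by
  simpa only [dotProduct, sq] using Real.sum_mul_le_sqrt_mul_sqrt Finset.univ x y

variable [DecidableEq n]

noncomputable def rightSingularVectors (A : Matrix m n ℝ) : Matrix n n ℝ :=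
  (isHermitian_conjTranspose_mul_self A).eigenvectorUnitary

noncomputable def singularValues (A : Matrix m n ℝ) (j : n) : ℝ :=
  √((isHermitian_conjTranspose_mul_self A).eigenvalues j)

lemma singularValues_nonneg (A : Matrix m n ℝ) (j : n) : 0 ≤ singularValues A j :=
  Real.sqrt_nonneg _

lemma star_rightSingularVectors (A : Matrix m n ℝ) :
    star (rightSingularVectors A) = (rightSingularVectors A)ᵀ := by
  rw [star_eq_conjTranspose, conjTranspose_eq_transpose_of_trivial]

lemma rightSingularVectors_transpose_mul_self (A : Matrix m n ℝ) :
    (rightSingularVectors A)ᵀ * rightSingularVectors A = 1 := by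
  rw [← star_rightSingularVectors]
  exact mem_unitaryGroup_iff'.mp (isHermitian_conjTranspose_mul_self A).eigenvectorUnitary.2

lemma rightSingularVectors_mul_transpose_self (A : Matrix m n ℝ) :
    rightSingularVectors A * (rightSingularVectors A)ᵀ = 1 := by
  rw [← star_rightSingularVectors]
  exact mem_unitaryGroup_iff.mp (isHermitian_conjTranspose_mul_self A).eigenvectorUnitary.2

lemma gram_mul_rightSingularVectors (A : Matrix m n ℝ) :
    (A * rightSingularVectors A)ᵀ * (A * rightSingularVectors A) =
      diagonal fun j => singularValues A j ^ 2 := by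
  have h := (isHermitian_conjTranspose_mul_self A).conjStarAlgAut_star_eigenvectorUnitary
  rw [Unitary.conjStarAlgAut_star_apply] at h
  have hsq : (fun j => singularValues A j ^ 2) =
      (isHermitian_conjTranspose_mul_self A).eigenvalues := funext fun j =>
    Real.sq_sqrt ((posSemidef_conjTranspose_mul_self A).eigenvalues_nonneg j)
  rw [hsq, transpose_mul, ← star_rightSingularVectors, ← conjTranspose_eq_transpose_of_trivial]
  simpa [rightSingularVectors, Matrix.mul_assoc] using h

lemma nuclearNorm_eq_sum_singularValues (A : Matrix m n ℝ) :
    nuclearNorm A = ∑ j, singularValues A j := by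
  rw [nuclearNorm, trace_mul_cycle, ← rightSingularVectors, star_rightSingularVectors,
    rightSingularVectors_transpose_mul_self, one_mul, trace_diagonal]
  rfl

lemma trace_transpose_mul_le_nuclearNorm (A U : Matrix m n ℝ)
    (hU : ∀ v, (U *ᵥ v) ⬝ᵥ (U *ᵥ v) ≤ v ⬝ᵥ v) : (Uᵀ * A).trace ≤ nuclearNorm A := by
  set V := rightSingularVectors A
  have htrace : (Uᵀ * A).trace = ((U * V)ᵀ * (A * V)).trace := by
    rw [transpose_mul, ← Matrix.mul_assoc, trace_mul_comm (Vᵀ * Uᵀ * A), ← Matrix.mul_assoc,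
      ← Matrix.mul_assoc, rightSingularVectors_mul_transpose_self, Matrix.one_mul]
  have hU_col (j : n) : (U * V)ᵀ j ⬝ᵥ (U * V)ᵀ j ≤ 1 := by
    have hV := congrFun (congrFun (rightSingularVectors_transpose_mul_self A) j) j
    rw [one_apply_eq] at hV
    exact (hU _).trans_eq hV
  have hA_col (j : n) : (A * V)ᵀ j ⬝ᵥ (A * V)ᵀ j = singularValues A j ^ 2 := by
    have h := congrFun (congrFun (gram_mul_rightSingularVectors A) j) j
    rwa [diagonal_apply_eq] at h
  rw [htrace, nuclearNorm_eq_sum_singularValues]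
  refine Finset.sum_le_sum fun j _ => ?_
  calc (U * V)ᵀ j ⬝ᵥ (A * V)ᵀ j
      ≤ √((U * V)ᵀ j ⬝ᵥ (U * V)ᵀ j) * √((A * V)ᵀ j ⬝ᵥ (A * V)ᵀ j) :=
        dotProduct_le_sqrt_mul_sqrt _ _
    _ ≤ 1 * singularValues A j := by
        rw [hA_col, Real.sqrt_sq (singularValues_nonneg A j)]
        exact mul_le_mul_of_nonneg_right (Real.sqrt_le_one.mpr (hU_col j))
          (singularValues_nonneg A j)
    _ = singularValues A j := one_mul _

lemma exists_trace_transpose_mul_eq_nuclearNorm (A : Matrix m n ℝ) :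
    ∃ U : Matrix m n ℝ, (∀ v, (U *ᵥ v) ⬝ᵥ (U *ᵥ v) ≤ v ⬝ᵥ v) ∧
      (Uᵀ * A).trace = nuclearNorm A := by
  set V := rightSingularVectors A
  set σ := singularValues A
  -- `(σ j)⁻¹ = 0` where `σ j = 0`, so `D` is the pseudo-inverse of `diagonal σ`.
  set D : Matrix n n ℝ := diagonal fun j => (σ j)⁻¹
  have hgram : (A * V)ᵀ * (A * V) = diagonal fun j => σ j ^ 2 := gram_mul_rightSingularVectors A
  refine ⟨A * V * D * Vᵀ, fun v => ?_, ?_⟩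
  · set w := Vᵀ *ᵥ v
    have hw : w ⬝ᵥ w = v ⬝ᵥ v := by
      rw [dotProduct_mulVec_self, transpose_transpose, rightSingularVectors_mul_transpose_self,
        one_mulVec]
    have hUv : (A * V * D * Vᵀ) *ᵥ v = (A * V) *ᵥ (D *ᵥ w) := by
      simp only [w, mulVec_mulVec, Matrix.mul_assoc]
    rw [hUv, dotProduct_mulVec_self, hgram, ← hw]
    simp only [D, dotProduct, mulVec_diagonal]
    refine Finset.sum_le_sum fun j _ => ?_
    calc (σ j)⁻¹ * w j * (σ j ^ 2 * ((σ j)⁻¹ * w j)) = ((σ j)⁻¹ * σ j) ^ 2 * (w j * w j) := by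
          ring
      _ ≤ 1 * (w j * w j) := by
          have hσ := singularValues_nonneg A j
          exact mul_le_mul_of_nonneg_right (pow_le_one₀ (by positivity) inv_mul_le_one)
            (mul_self_nonneg _)
      _ = w j * w j := one_mul _
  · have hUt : (A * V * D * Vᵀ)ᵀ * A = V * (D * ((A * V)ᵀ * A)) := by
      simp only [transpose_mul, transpose_transpose, D, diagonal_transpose, Matrix.mul_assoc]
    rw [hUt, trace_mul_comm, Matrix.mul_assoc, Matrix.mul_assoc _ A, hgram,
      diagonal_mul_diagonal, trace_diagonal, nuclearNorm_eq_sum_singularValues]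
    refine Finset.sum_congr rfl fun j _ => ?_
    rw [sq, ← mul_assoc, inv_mul_mul_self]

end Matrix

lemma convexOn_nuclearNorm {m n : Type*} [Fintype m] [Fintype n] [DecidableEq n] :
    ConvexOn ℝ Set.univ (nuclearNorm : Matrix m n ℝ → ℝ) := by
  refine ⟨convex_univ, fun X _ Y _ a b ha hb _ => ?_⟩
  obtain ⟨U, hU, hUeq⟩ := Matrix.exists_trace_transpose_mul_eq_nuclearNorm (a • X + b • Y)
  rw [← hUeq, Matrix.mul_add, Matrix.mul_smul, Matrix.mul_smul, Matrix.trace_add,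
    Matrix.trace_smul, Matrix.trace_smul]
  exact add_le_add
    (smul_le_smul_of_nonneg_left (Matrix.trace_transpose_mul_le_nuclearNorm X U hU) ha)
    (smul_le_smul_of_nonneg_left (Matrix.trace_transpose_mul_le_nuclearNorm Y U hU) hb)

namespace StrictConvexOn

variable {V W : Type*} [AddCommGroup V] [Module ℝ V] [AddCommGroup W] [Module ℝ W]
  {f : W → ℝ} {g : V → ℝ}

lemma map_eq_of_minimizers (hf : StrictConvexOn ℝ Set.univ f) (hg : ConvexOn ℝ Set.univ g)
    (L : V →ₗ[ℝ] W) (c : W) {x y : V}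
    (hx : ∀ z, f (L x - c) + g x ≤ f (L z - c) + g z)
    (hy : ∀ z, f (L y - c) + g y ≤ f (L z - c) + g z) : L x = L y := by
  by_contra hne
  have hne' : L x - c ≠ L y - c := fun h => hne (sub_left_inj.mp h)
  have hmid : L ((1 / 2 : ℝ) • x + (1 / 2 : ℝ) • y) - c =
      (1 / 2 : ℝ) • (L x - c) + (1 / 2 : ℝ) • (L y - c) := by
    rw [map_add, map_smul, map_smul]
    module
  have hf_mid :=
    hf.2 (Set.mem_univ _) (Set.mem_univ _) hne' one_half_pos one_half_pos (add_halves 1)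
  have hg_mid :=
    hg.2 (Set.mem_univ x) (Set.mem_univ y) one_half_pos.le one_half_pos.le (add_halves 1)
  rw [← hmid] at hf_mid
  simp only [smul_eq_mul] at hf_mid hg_mid
  linarith [hx y, hy x, hx ((1 / 2 : ℝ) • x + (1 / 2 : ℝ) • y)]

lemma setOf_minimizers_eq (hf : StrictConvexOn ℝ Set.univ f) (hg : ConvexOn ℝ Set.univ g)
    (L : V →ₗ[ℝ] W) (c : W) {lam : ℝ} (hlam : 0 < lam) {xb : V}
    (hmin : ∀ z, f (L xb - c) + lam * g xb ≤ f (L z - c) + lam * g z) :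
    {x | ∀ z, f (L x - c) + lam * g x ≤ f (L z - c) + lam * g z} =
      {x | L x = L xb ∧ g x = g xb} := by
  ext x
  constructor
  · intro hx
    have hLx : L x = L xb := hf.map_eq_of_minimizers (hg.smul hlam.le) L c hx hmin
    have hobj := le_antisymm (hx xb) (hmin x)
    rw [hLx, add_right_inj] at hobj
    exact ⟨hLx, mul_left_cancel₀ hlam.ne' hobj⟩
  · rintro ⟨hLx, hgx⟩ z
    rw [hLx, hgx]
    exact hmin z

end StrictConvexOn

theorem regularized_solution_set_eq_general {n p : ℕ} {E : Type*}
    [NormedAddCommGroup E] [InnerProductSpace ℝ E]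
    (A : Matrix (Fin n) (Fin p) ℝ →ₗ[ℝ] E) (b : E) (lam : ℝ) (hlam : 0 < lam)
    (f : E → ℝ) (hf : StrictConvexOn ℝ Set.univ f)
    (Xb : Matrix (Fin n) (Fin p) ℝ)
    (hmin : ∀ X, f (A Xb - b) + lam * nuclearNorm Xb ≤ f (A X - b) + lam * nuclearNorm X) :
    {X : Matrix (Fin n) (Fin p) ℝ |
        ∀ Y, f (A X - b) + lam * nuclearNorm X ≤ f (A Y - b) + lam * nuclearNorm Y}
      = {X | A X = A Xb ∧ nuclearNorm X = nuclearNorm Xb} :=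
  hf.setOf_minimizers_eq convexOn_nuclearNorm A b hlam hmin

theorem regularized_solution_set_eq {n p : ℕ} {E : Type*}
    [NormedAddCommGroup E] [InnerProductSpace ℝ E] [FiniteDimensional ℝ E]
    (A : Matrix (Fin n) (Fin p) ℝ →ₗ[ℝ] E) (b : E) (lam : ℝ) (hlam : 0 < lam)
    (f : E → ℝ) (hf : StrictConvexOn ℝ Set.univ f)
    (Xb : Matrix (Fin n) (Fin p) ℝ)
    (hmin : ∀ X, f (A Xb - b) + lam * nuclearNorm Xb ≤ f (A X - b) + lam * nuclearNorm X) :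
    {X : Matrix (Fin n) (Fin p) ℝ |
        ∀ Y, f (A X - b) + lam * nuclearNorm X ≤ f (A Y - b) + lam * nuclearNorm Y}
      = {X | A X = A Xb ∧ nuclearNorm X = nuclearNorm Xb} :=
  regularized_solution_set_eq_general A b lam hlam f hf Xb hmin
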